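/- Let 0 < q < 1 and let x ∈ ℂ with q < |x| < q^{−1} and x ≠ −1. Then 1 + 2x·θ'(−x;q)/θ(−x;q) = (1 − x)/(1 + x) + 2·Σ_{k=1}^∞ (−q)^k · (x^k − x^{−k})/(1 − q^k), the series converging absolutely. -/

import Mathlib

/-!
For `q < ‖y‖ < q⁻¹` the products defining `θ(y) = (y;q)_∞ (q/y;q)_∞` converge locally uniformly
and have no zero factor, so `y θ'(y)/θ(y)` is the sum of the logarithmic derivatives of the factors:
`y θ'(y)/θ(y) = -y/(1-y) - L(y) + L(1/y)` with `L(z) = Σ_{k≥1} z q^k/(1 - z q^k)`.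
Expanding every term of `L(z)` as a geometric series and summing the absolutely convergent double
series `Σ_{k,n≥1} (z q^k)^n` by columns instead gives the Lambert series
`L(z) = Σ_{n≥1} (zq)^n/(1 - q^n)`; the theorem is the case `y = -x`.
-/

/-- The infinite q-Pochhammer symbol `(a;q)_∞ = Π_{k≥0} (1 − a q^k)`. -/
noncomputable def qPoch (q : ℝ) (a : ℂ) : ℂ := ∏' k : ℕ, (1 - a * (q : ℂ) ^ k)

/-- The theta function `θ(x;q) = (x;q)_∞ (q/x;q)_∞`. -/
noncomputable def theta (q : ℝ) (x : ℂ) : ℂ := qPoch q x * qPoch q ((q : ℂ) / x)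

open Filter Topology

section

variable {𝕜 : Type*} [NormedField 𝕜] {q z : 𝕜}

theorem hasSum_pow_succ_of_norm_lt_one {t : 𝕜} (ht : ‖t‖ < 1) :
    HasSum (fun n : ℕ => t ^ (n + 1)) (t / (1 - t)) := by
  simpa only [pow_succ', div_eq_mul_inv] using (hasSum_geometric_of_norm_lt_one ht).mul_left t

variable [CompleteSpace 𝕜]

theorem summable_lambert_double (hq : ‖q‖ < 1) (hzq : ‖z * q‖ < 1) :
    Summable fun p : ℕ × ℕ => (z * q ^ (p.1 + 1)) ^ (p.2 + 1) := by
  refine .of_norm_bounded ((summable_geometric_of_lt_one (norm_nonneg q) hq).mul_of_nonneg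
    (summable_geometric_of_lt_one (norm_nonneg _) hzq) (fun _ => by positivity)
    (fun _ => by positivity)) fun ⟨k, n⟩ => ?_
  calc ‖(z * q ^ (k + 1)) ^ (n + 1)‖ = (‖q‖ ^ k) ^ (n + 1) * ‖z * q‖ ^ (n + 1) := by
        simp only [norm_pow, norm_mul]; ring
    _ ≤ ‖q‖ ^ k * ‖z * q‖ ^ (n + 1) := by
        gcongr
        exact pow_le_of_le_one (by positivity) (pow_le_one₀ (norm_nonneg q) hq.le) n.succ_ne_zero
    _ ≤ ‖q‖ ^ k * ‖z * q‖ ^ n :=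
        mul_le_mul_of_nonneg_left (pow_le_pow_of_le_one (norm_nonneg _) hzq.le n.le_succ)
          (by positivity)

theorem hasSum_lambert_series (hq : ‖q‖ < 1) (hzq : ‖z * q‖ < 1) :
    HasSum (fun n : ℕ => (z * q) ^ (n + 1) / (1 - q ^ (n + 1)))
      (∑' k : ℕ, z * q ^ (k + 1) / (1 - z * q ^ (k + 1))) := by
  have hF := summable_lambert_double hq hzq
  have hrow (k : ℕ) : HasSum (fun n => (z * q ^ (k + 1)) ^ (n + 1))
      (z * q ^ (k + 1) / (1 - z * q ^ (k + 1))) := by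
    refine hasSum_pow_succ_of_norm_lt_one (hzq.trans_le' ?_)
    rw [pow_succ', ← mul_assoc, norm_mul, norm_pow]
    exact mul_le_of_le_one_right (norm_nonneg _) (pow_le_one₀ (norm_nonneg q) hq.le)
  have hcol (n : ℕ) : HasSum (fun k => (z * q ^ (k + 1)) ^ (n + 1))
      ((z * q) ^ (n + 1) / (1 - q ^ (n + 1))) := by
    have hqn : ‖q ^ (n + 1)‖ < 1 := by
      rw [norm_pow]; exact pow_lt_one₀ (norm_nonneg q) hq n.succ_ne_zero
    have hterm (k : ℕ) :
        (z * q ^ (k + 1)) ^ (n + 1) = z ^ (n + 1) * (q ^ (n + 1)) ^ (k + 1) := by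
      rw [mul_pow, ← pow_mul, ← pow_mul, mul_comm (k + 1)]
    simpa only [hterm, mul_pow, mul_div_assoc] using
      (hasSum_pow_succ_of_norm_lt_one hqn).mul_left (z ^ (n + 1))
  rw [(hF.hasSum.prod_fiberwise hrow).tsum_eq, ← (Equiv.prodComm ℕ ℕ).tsum_eq]
  exact hF.prod_symm.hasSum.prod_fiberwise hcol

theorem summable_pow_div_one_sub_mul_pow (hq : ‖q‖ < 1) (a : 𝕜) :
    Summable fun k : ℕ => q ^ k / (1 - a * q ^ k) := by
  have hlim : Tendsto (fun k : ℕ => (1 - a * q ^ k)⁻¹) atTop (𝓝 1) := by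
    simpa using ((tendsto_pow_atTop_nhds_zero_of_norm_lt_one hq).const_mul a).const_sub 1
      |>.inv₀ (by simp)
  refine summable_of_isBigO_nat (summable_geometric_of_lt_one (norm_nonneg q) hq) ?_
  simpa only [div_eq_mul_inv, mul_one, norm_pow] using
    (Asymptotics.isBigO_norm_right.2 (Asymptotics.isBigO_refl (fun k : ℕ => q ^ k) atTop)).mul
      (hlim.isBigO_one ℝ)

end

theorem one_sub_mul_pow_ne_zero {𝕜 : Type*} [NormedField 𝕜] {a q : 𝕜} (hq : ‖q‖ ≤ 1)
    (ha : ‖a‖ < 1) (k : ℕ) : 1 - a * q ^ k ≠ 0 := by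
  refine sub_ne_zero.2 fun h => ha.not_ge ?_
  calc 1 = ‖a * q ^ k‖ := by rw [← h, norm_one]
    _ ≤ ‖a‖ := by
      rw [norm_mul, norm_pow]
      exact mul_le_of_le_one_right (norm_nonneg a) (pow_le_one₀ (norm_nonneg q) hq)

theorem norm_mul_ofReal_lt_one {q : ℝ} (hq0 : 0 < q) {y : ℂ} (hy : ‖y‖ < q⁻¹) :
    ‖y * q‖ < 1 := by
  rw [norm_mul, Complex.norm_real, Real.norm_of_nonneg hq0.le]
  exact (lt_inv_mul_iff₀' hq0).1 (by rwa [mul_one])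

theorem norm_inv_mul_ofReal_lt_one {q : ℝ} (hq0 : 0 < q) {y : ℂ} (hy : q < ‖y‖) :
    ‖y⁻¹ * q‖ < 1 :=
  norm_mul_ofReal_lt_one hq0 (by rwa [norm_inv, inv_lt_inv₀ (hq0.trans hy) hq0])

section qPoch

variable {q : ℝ}

theorem qPoch_ne_zero (hq : |q| < 1) {a : ℂ} (ha : ∀ k : ℕ, 1 - a * (q : ℂ) ^ k ≠ 0) :
    qPoch q a ≠ 0 := by
  refine tprod_one_add_ne_zero_of_summable (f := fun k => -(a * (q : ℂ) ^ k))
    (by simpa only [← sub_eq_add_neg] using ha) ?_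
  simpa [norm_pow] using (summable_geometric_of_lt_one (abs_nonneg q) hq).mul_left ‖a‖

theorem multipliableLocallyUniformlyOn_qPoch (hq : |q| < 1) (R : ℝ) :
    MultipliableLocallyUniformlyOn (fun k (a : ℂ) => 1 - a * (q : ℂ) ^ k) (Metric.ball 0 R) := by
  simp_rw [sub_eq_add_neg]
  refine Summable.multipliableLocallyUniformlyOn_one_add Metric.isOpen_ball
    ((summable_geometric_of_lt_one (abs_nonneg q) hq).mul_left R) (.of_forall fun k a ha => ?_)
    (fun k => by fun_prop)
  rw [norm_neg, norm_mul, norm_pow, Complex.norm_real, Real.norm_eq_abs]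
  exact mul_le_mul_of_nonneg_right (mem_ball_zero_iff.1 ha).le (by positivity)

theorem differentiable_qPoch (hq : |q| < 1) : Differentiable ℂ (qPoch q) := fun a =>
  ((multipliableLocallyUniformlyOn_qPoch hq (‖a‖ + 1)).hasProdLocallyUniformlyOn.differentiableOn
    (.of_forall fun s => by fun_prop) Metric.isOpen_ball).differentiableAt
    (Metric.isOpen_ball.mem_nhds (by simp))

theorem logDeriv_qPoch (hq : |q| < 1) {a : ℂ} (ha : ∀ k : ℕ, 1 - a * (q : ℂ) ^ k ≠ 0) :
    logDeriv (qPoch q) a = ∑' k : ℕ, -(q : ℂ) ^ k / (1 - a * (q : ℂ) ^ k) := by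
  have hfactor (k : ℕ) : logDeriv (fun b : ℂ => 1 - b * (q : ℂ) ^ k) a
      = -(q : ℂ) ^ k / (1 - a * (q : ℂ) ^ k) := by
    rw [logDeriv_apply, deriv_const_sub, deriv_mul_const_field, deriv_id'', one_mul]
  have hsum : Summable fun k : ℕ => -(q : ℂ) ^ k / (1 - a * (q : ℂ) ^ k) := by
    simpa only [neg_div] using (summable_pow_div_one_sub_mul_pow (by simpa using hq) a).neg
  simp_rw [← hfactor] at hsum ⊢
  exact logDeriv_tprod_eq_tsum Metric.isOpen_ball (by simp) ha (fun k => by fun_prop) hsum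
    (multipliableLocallyUniformlyOn_qPoch hq (‖a‖ + 1)) (qPoch_ne_zero hq ha)

theorem logDeriv_theta (hq : |q| < 1) {y : ℂ} (hy0 : y ≠ 0) (h1 : qPoch q y ≠ 0)
    (h2 : qPoch q ((q : ℂ) / y) ≠ 0) :
    logDeriv (theta q) y =
      logDeriv (qPoch q) y + logDeriv (qPoch q) ((q : ℂ) / y) * (-q / y ^ 2) := by
  have htheta : theta q = fun z => qPoch q z * (qPoch q ∘ fun z : ℂ => (q : ℂ) / z) z := rfl
  have hdiv : DifferentiableAt ℂ (fun z : ℂ => (q : ℂ) / z) y := by fun_prop (disch := exact hy0)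
  rw [htheta, logDeriv_mul y h1 h2 (differentiable_qPoch hq y)
    ((differentiable_qPoch hq _).comp y hdiv), logDeriv_comp (differentiable_qPoch hq _) hdiv,
    deriv_const_div_id]

theorem mul_logDeriv_theta (hq0 : 0 < q) (hq1 : q < 1) {y : ℂ} (hy1 : q < ‖y‖)
    (hy2 : ‖y‖ < q⁻¹) (hy : y ≠ 1) :
    y * logDeriv (theta q) y =
      -(y / (1 - y)) - ∑' k : ℕ, y * (q : ℂ) ^ (k + 1) / (1 - y * (q : ℂ) ^ (k + 1))
        + ∑' k : ℕ, y⁻¹ * (q : ℂ) ^ (k + 1) / (1 - y⁻¹ * (q : ℂ) ^ (k + 1)) := by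
  have hq : |q| < 1 := by rwa [abs_of_pos hq0]
  have hqn : ‖(q : ℂ)‖ ≤ 1 := by rw [Complex.norm_real, Real.norm_eq_abs]; exact hq.le
  have hy0 : y ≠ 0 := norm_pos_iff.1 (hq0.trans hy1)
  have h1 : ∀ k : ℕ, 1 - y * (q : ℂ) ^ k ≠ 0
    | 0 => by rw [pow_zero, mul_one, sub_ne_zero]; exact hy.symm
    | k + 1 => by
      rw [pow_succ', ← mul_assoc]
      exact one_sub_mul_pow_ne_zero hqn (norm_mul_ofReal_lt_one hq0 hy2) k
  have h2 : ∀ k : ℕ, 1 - (q : ℂ) / y * (q : ℂ) ^ k ≠ 0 := one_sub_mul_pow_ne_zero hqn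
    (div_eq_inv_mul (q : ℂ) y ▸ norm_inv_mul_ofReal_lt_one hq0 hy1)
  have hsum : Summable fun k : ℕ => -(q : ℂ) ^ k / (1 - y * (q : ℂ) ^ k) := by
    simpa only [neg_div] using (summable_pow_div_one_sub_mul_pow (by simpa using hq) y).neg
  rw [logDeriv_theta hq hy0 (qPoch_ne_zero hq h1) (qPoch_ne_zero hq h2),
    logDeriv_qPoch hq h1, logDeriv_qPoch hq h2, hsum.tsum_eq_zero_add,
    ← tsum_mul_right, mul_add, mul_add, ← tsum_mul_left, ← tsum_mul_left,
    sub_eq_add_neg (-(y / (1 - y))), ← tsum_neg]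
  congr 1
  · congr 1
    · field_simp
    · exact tsum_congr fun k => by ring
  · refine tsum_congr fun k => ?_
    field_simp
    ring

end qPoch

/-- For `q < |x| < q⁻¹`, `x ≠ −1`:
`1 + 2x θ'(−x;q)/θ(−x;q) = (1−x)/(1+x) + 2 Σ_{k≥1} (−q)^k (x^k − x^{−k})/(1−q^k)`,
the series converging absolutely. -/
theorem laurent_expansion_odd (q : ℝ) (hq0 : 0 < q) (hq1 : q < 1) (x : ℂ)
    (hx1 : q < ‖x‖) (hx2 : ‖x‖ < q⁻¹) (hxm : x ≠ -1) :
    Summable (fun k : ℕ =>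
      (-(q : ℂ)) ^ (k + 1) * (x ^ (k + 1) - x ^ (-((k : ℤ) + 1))) / (1 - (q : ℂ) ^ (k + 1))) ∧
    1 + 2 * x * deriv (theta q) (-x) / theta q (-x) =
      (1 - x) / (1 + x) +
        2 * ∑' k : ℕ,
          (-(q : ℂ)) ^ (k + 1) * (x ^ (k + 1) - x ^ (-((k : ℤ) + 1))) /
            (1 - (q : ℂ) ^ (k + 1)) := by
  rw [← norm_neg] at hx1 hx2
  have hq : ‖(q : ℂ)‖ < 1 := by rwa [Complex.norm_real, Real.norm_of_nonneg hq0.le]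
  have hL := (hasSum_lambert_series hq (norm_mul_ofReal_lt_one hq0 hx2)).sub
    (hasSum_lambert_series hq (norm_inv_mul_ofReal_lt_one hq0 hx1))
  have hterm (k : ℕ) : (-(q : ℂ)) ^ (k + 1) * (x ^ (k + 1) - x ^ (-((k : ℤ) + 1))) /
      (1 - (q : ℂ) ^ (k + 1)) = (-x * q) ^ (k + 1) / (1 - (q : ℂ) ^ (k + 1))
        - ((-x)⁻¹ * q) ^ (k + 1) / (1 - (q : ℂ) ^ (k + 1)) := by
    rw [← Nat.cast_add_one, zpow_neg, zpow_natCast]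
    ring
  simp_rw [hterm]
  refine ⟨hL.summable, ?_⟩
  have hx : 1 + x ≠ 0 := fun h => hxm (eq_neg_of_add_eq_zero_right h)
  have htheta := mul_logDeriv_theta hq0 hq1 hx1 hx2 (fun h => hxm (neg_eq_iff_eq_neg.1 h))
  have hfrac : (1 - x) / (1 + x) = 1 - 2 * (x / (1 + x)) := by field_simp; ring
  rw [hL.tsum_eq, mul_div_assoc, ← logDeriv_apply, hfrac]
  linear_combination (-2) * htheta
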